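/- arXiv:2312.08501 — 4 statements merged into one kernel-verified Lean document; each statement's English description precedes it below -/
import Mathlib

section
/- A point (p_0,p_1,p_2) with 4 p_0 p_2 = p_1^2, all p_i nonzero, and data (u_0,u_1,u_2), is a critical point of the likelihood function on the Hardy–Weinberg curve if and only if the three polynomials 4 p_2 u_0 - p_1 u_1 + 2 p_2 u_1 - 2 p_1 u_2 and 2 p_1 u_0 - 2 p_0 u_1 + p_1 u_1 - 4 p_0 u_2 vanish (together with 4 p_0 p_2 - p_1^2 = 0). -/
/-- A point `(p₀,p₁,p₂)` on the Hardy–Weinberg curve `4p₀p₂ = p₁²`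
with all coordinates (and the coordinate sum) nonzero is a critical point of the
likelihood `p₀^{u₀}p₁^{u₁}p₂^{u₂}/(p₀+p₁+p₂)^{u₀+u₁+u₂}` — i.e. the logarithmic
differential vanishes on the tangent space of the curve — if and only if the two
stated polynomials vanish (together with the curve equation, which holds by
hypothesis). -/
theorem stmt2 (p0 p1 p2 u0 u1 u2 : ℝ)
    (hcurve : 4 * p0 * p2 = p1 ^ 2)
    (h0 : p0 ≠ 0) (h1 : p1 ≠ 0) (h2 : p2 ≠ 0) (hs : p0 + p1 + p2 ≠ 0) :
    (∀ v0 v1 v2 : ℝ,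
        4 * p2 * v0 - 2 * p1 * v1 + 4 * p0 * v2 = 0 →
        (u0 / p0 - (u0 + u1 + u2) / (p0 + p1 + p2)) * v0
          + (u1 / p1 - (u0 + u1 + u2) / (p0 + p1 + p2)) * v1
          + (u2 / p2 - (u0 + u1 + u2) / (p0 + p1 + p2)) * v2 = 0)
      ↔ (4 * p2 * u0 - p1 * u1 + 2 * p2 * u1 - 2 * p1 * u2 = 0
          ∧ 2 * p1 * u0 - 2 * p0 * u1 + p1 * u1 - 4 * p0 * u2 = 0) := by
  have hA : 2 * p0 + p1 ≠ 0 := by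
    intro h
    apply hs
    have hp1 : p1 = -(2 * p0) := by linarith
    have hp2 : p2 = p0 := by
      have h4 : (4 * p0) * p2 = (4 * p0) * p0 := by
        linear_combination hcurve + (p1 - 2 * p0) * hp1
      exact mul_left_cancel₀ (mul_ne_zero four_ne_zero h0) h4
    rw [hp1, hp2]; ring
  have hB : p1 + 2 * p2 ≠ 0 := by
    intro h
    apply hs
    have hp1 : p1 = -(2 * p2) := by linarith
    have hp0 : p0 = p2 := by
      have h4 : (4 * p2) * p0 = (4 * p2) * p2 := by
        linear_combination hcurve + (p1 - 2 * p2) * hp1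
      exact mul_left_cancel₀ (mul_ne_zero four_ne_zero h2) h4
    rw [hp1, hp0]; ring
  constructor
  · intro h
    have e1 := h (2 * p1) (4 * p2) 0 (by ring)
    have e2 := h 0 (4 * p0) (2 * p1) (by ring)
    field_simp at e1 e2
    constructor
    · have hT1m : (p2 * ((p0 + p1 + p2) * (p1 * (2 * p0 + p1)))) *
          (4 * p2 * u0 - p1 * u1 + 2 * p2 * u1 - 2 * p1 * u2) = 0 := by
        linear_combination 2 * (p0 + p1 + p2) * e1 + 2 * (p0 + p1 + p2) * p2 *
          (p1 * (u0 + u1 / 2) - u1 * (p0 + p1 + p2) + p1 * (u0 + u1 + u2)) * hcurve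
      exact (mul_eq_zero.mp hT1m).resolve_left (mul_ne_zero h2 (mul_ne_zero hs (mul_ne_zero h1 hA)))
    · have hT2m : (p0 * ((p0 + p1 + p2) * (p1 * (p1 + 2 * p2)))) *
          (2 * p1 * u0 - 2 * p0 * u1 + p1 * u1 - 4 * p0 * u2) = 0 := by
        linear_combination (-2) * (p0 + p1 + p2) * e2 - 2 * (p0 + p1 + p2) * p0 *
          (p1 * (u2 + u1 / 2) - u1 * (p0 + p1 + p2) + p1 * (u0 + u1 + u2)) * hcurve
      exact (mul_eq_zero.mp hT2m).resolve_left (mul_ne_zero h0 (mul_ne_zero hs (mul_ne_zero h1 hB)))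
  · rintro ⟨hT1, hT2⟩ v0 v1 v2 ht
    have hE1 : 2 * p1 * (u0 / p0 - (u0 + u1 + u2) / (p0 + p1 + p2))
        + 4 * p2 * (u1 / p1 - (u0 + u1 + u2) / (p0 + p1 + p2)) = 0 := by
      field_simp
      linear_combination (p1 * (2 * p0 + p1) / 2) * hT1
        + (u1 * (p0 + p1 + p2) - p1 * (u0 + u1 + u2) - p1 * (u0 + u1 / 2)) * hcurve
    have hE2 : 4 * p0 * (u1 / p1 - (u0 + u1 + u2) / (p0 + p1 + p2))
        + 2 * p1 * (u2 / p2 - (u0 + u1 + u2) / (p0 + p1 + p2)) = 0 := by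
      field_simp
      linear_combination (-(p1 * (p1 + 2 * p2)) / 2) * hT2
        + (u1 * (p0 + p1 + p2) - p1 * (u0 + u1 + u2) - p1 * (u2 + u1 / 2)) * hcurve
    have key : (2 * p1) * ((u0 / p0 - (u0 + u1 + u2) / (p0 + p1 + p2)) * v0
          + (u1 / p1 - (u0 + u1 + u2) / (p0 + p1 + p2)) * v1
          + (u2 / p2 - (u0 + u1 + u2) / (p0 + p1 + p2)) * v2) = 0 := by
      linear_combination v0 * hE1 + v2 * hE2
        - (u1 / p1 - (u0 + u1 + u2) / (p0 + p1 + p2)) * ht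
    exact (mul_eq_zero.mp key).resolve_left (mul_ne_zero two_ne_zero h1)
end

section
/- For a 2×2 matrix of variables p = (p_{11}, p_{12}; p_{21}, p_{22}) and data u = (u_{11}, u_{12}; u_{21}, u_{22}), if p has rank one, positive entries, entries summing to 1, and satisfies p_{11}(u_{12}+u_{22}) = p_{12}(u_{11}+u_{21}) and p_{11}(u_{21}+u_{22}) = p_{21}(u_{11}+u_{12}) (with u positive summing to 1), then p_{ij} = u_{i+} u_{+j} for all i,j. -/
/-- For a 2×2 probability matrix `p` of rank one with positive
entries summing to 1, and positive data `u` summing to 1, the vanishing of the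
two augmented 2×2 minors `p₁₁(u₁₂+u₂₂) = p₁₂(u₁₁+u₂₁)` and
`p₁₁(u₂₁+u₂₂) = p₂₁(u₁₁+u₁₂)` forces `p_{ij} = u_{i+} u_{+j}`. -/
theorem stmt6 (p11 p12 p21 p22 u11 u12 u21 u22 : ℝ)
    (hrank : (Matrix.of ![![p11, p12], ![p21, p22]]).rank = 1)
    (hp : 0 < p11 ∧ 0 < p12 ∧ 0 < p21 ∧ 0 < p22)
    (hpsum : p11 + p12 + p21 + p22 = 1)
    (hu : 0 < u11 ∧ 0 < u12 ∧ 0 < u21 ∧ 0 < u22)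
    (husum : u11 + u12 + u21 + u22 = 1)
    (h1 : p11 * (u12 + u22) = p12 * (u11 + u21))
    (h2 : p11 * (u21 + u22) = p21 * (u11 + u12)) :
    p11 = (u11 + u12) * (u11 + u21) ∧ p12 = (u11 + u12) * (u12 + u22)
      ∧ p21 = (u21 + u22) * (u11 + u21) ∧ p22 = (u21 + u22) * (u12 + u22) := by
  obtain ⟨hp11, hp12, hp21, hp22⟩ := hp
  obtain ⟨hu11, hu12, hu21, hu22⟩ := hu
  have hdet : p11 * p22 - p12 * p21 = 0 := by
    by_contra hne
    have hu' : IsUnit (Matrix.of ![![p11, p12], ![p21, p22]]).det := by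
      rw [Matrix.det_fin_two_of]
      exact (isUnit_iff_ne_zero).mpr hne
    have := Matrix.rank_of_isUnit _ ((Matrix.isUnit_iff_isUnit_det _).mpr hu')
    rw [hrank] at this
    simp [Fintype.card_fin] at this
  have e1 : p11 ^ 2 = (u11 + u12) * (u11 + u21) * p11 := by
    linear_combination (-(p11^2)*((u11+u12+u21+u22)+1))*husum
      + ((u11+u12)*p11 + p11*(u21+u22))*h1
      + ((u11+u21)*p11 + p12*(u11+u21))*h2
      + (u11+u12)*(u11+u21)*p11*hpsum + (-(u11+u12)*(u11+u21))*hdet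
  have k1 : p11 = (u11 + u12) * (u11 + u21) := by
    have := mul_right_cancel₀ (ne_of_gt hp11) (by linarith [e1] : p11 * p11 = (u11+u12)*(u11+u21)*p11)
    linarith
  have hb : (0:ℝ) < u11 + u21 := by linarith
  have ha : (0:ℝ) < u11 + u12 := by linarith
  have k2 : p12 = (u11 + u12) * (u12 + u22) := by
    apply mul_right_cancel₀ (ne_of_gt hb)
    linear_combination -h1 + (u12+u22)*k1
  have k3 : p21 = (u21 + u22) * (u11 + u21) := by
    apply mul_right_cancel₀ (ne_of_gt ha)
    linear_combination -h2 + (u21+u22)*k1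
  have k4 : p22 = (u21 + u22) * (u12 + u22) := by
    apply mul_left_cancel₀ (ne_of_gt hp11)
    linear_combination hdet + p21*k2 + (u11+u12)*(u12+u22)*k3
      - (u21+u22)*(u12+u22)*k1
  exact ⟨k1, k2, k3, k4⟩
end

section
/- Suppose p is a d_1 × ... × d_n tensor of positive reals of rank one with entries summing to 1, and u is a positive tensor of the same format summing to 1. If for every index i the 2×2 minors of the flattening P_i of p, augmented with the column of i-th marginal sums of u, all vanish, then p_{i_1...i_n} = prod_{k=1}^n u-marginal_{k}(i_k), i.e., p equals the product of the one-dimensional marginals of u. -/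
open Finset

private lemma stmt15_symm_self {n : ℕ} {d : Fin n → ℕ} (k : Fin n) (c : Fin (d k))
    (w : ∀ j : {j // j ≠ k}, Fin (d j.1)) :
    ((Equiv.piSplitAt k (fun j => Fin (d j))).symm (c, w)) k = c := by
  have h := (Equiv.piSplitAt k (fun j => Fin (d j))).apply_symm_apply (c, w)
  simp only [Equiv.piSplitAt_apply] at h
  exact congrArg Prod.fst h

private lemma stmt15_symm_ne {n : ℕ} {d : Fin n → ℕ} (k : Fin n) (c : Fin (d k))
    (w : ∀ j : {j // j ≠ k}, Fin (d j.1)) (j : Fin n) (h : j ≠ k) :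
    ((Equiv.piSplitAt k (fun j => Fin (d j))).symm (c, w)) j = w ⟨j, h⟩ := by
  have h2 := (Equiv.piSplitAt k (fun j => Fin (d j))).apply_symm_apply (c, w)
  simp only [Equiv.piSplitAt_apply] at h2
  have := congrArg Prod.snd h2
  exact congrFun this ⟨j, h⟩

private lemma stmt15_upd {n : ℕ} {d : Fin n → ℕ} (k : Fin n) (a b : Fin (d k))
    (w : ∀ j : {j // j ≠ k}, Fin (d j.1)) :
    Function.update ((Equiv.piSplitAt k (fun j => Fin (d j))).symm (b, w)) k a
      = (Equiv.piSplitAt k (fun j => Fin (d j))).symm (a, w) := by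
  funext j
  rcases eq_or_ne j k with rfl | h
  · rw [Function.update_self, stmt15_symm_self]
  · rw [Function.update_of_ne h, stmt15_symm_ne k b w j h, stmt15_symm_ne k a w j h]

private lemma stmt15_marg {n : ℕ} {d : Fin n → ℕ} (f : (∀ j, Fin (d j)) → ℝ)
    (k : Fin n) (a : Fin (d k)) :
    (∑ z : ∀ j, Fin (d j), if z k = a then f z else 0)
      = ∑ w : ∀ j : {j // j ≠ k}, Fin (d j.1),
          f ((Equiv.piSplitAt k (fun j => Fin (d j))).symm (a, w)) := by
  rw [← Equiv.sum_comp (Equiv.piSplitAt k (fun j => Fin (d j))).symm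
      (fun z => if z k = a then f z else 0), Fintype.sum_prod_type]
  have : ∀ (b : Fin (d k)) (w : ∀ j : {j // j ≠ k}, Fin (d j.1)),
      (if ((Equiv.piSplitAt k (fun j => Fin (d j))).symm (b, w)) k = a then
          f ((Equiv.piSplitAt k (fun j => Fin (d j))).symm (b, w)) else 0)
        = if b = a then f ((Equiv.piSplitAt k (fun j => Fin (d j))).symm (b, w)) else 0 := by
    intro b w; rw [stmt15_symm_self]
  simp only [this]
  rw [Finset.sum_comm]
  simp [Finset.sum_ite_eq']

private lemma stmt15_marg_total {n : ℕ} {d : Fin n → ℕ} (f : (∀ j, Fin (d j)) → ℝ)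
    (k : Fin n) :
    (∑ b : Fin (d k), ∑ z : ∀ j, Fin (d j), if z k = b then f z else 0)
      = ∑ z : ∀ j, Fin (d j), f z := by
  rw [Finset.sum_comm]
  simp [Finset.sum_ite_eq]

/-- Let `p` be a positive rank-one `d₁ × ⋯ × dₙ` tensor summing
to 1 and `u` a positive tensor of the same format summing to 1.  If all 2×2
minors of each flattening `Pᵢ` augmented with the column of `i`-th marginal sums
of `u` vanish, then `p` is the product of the one-dimensional marginals of `u`:
`p_{i₁…iₙ} = ∏ₖ u-marginalₖ(iₖ)`. -/
theorem stmt15 (n : ℕ) (d : Fin n → ℕ)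
    (p u : (∀ i, Fin (d i)) → ℝ)
    (hppos : ∀ x, 0 < p x) (hpsum : ∑ x, p x = 1)
    (hupos : ∀ x, 0 < u x) (husum : ∑ x, u x = 1)
    (hrank : ∃ v : ∀ i, Fin (d i) → ℝ, ∀ x, p x = ∏ i, v i (x i))
    -- minors of the flattening `Pᵢ` among the `p`-columns:
    (hminp : ∀ (i : Fin n) (a b : Fin (d i)) (x y : ∀ j, Fin (d j)),
        p (Function.update x i a) * p (Function.update y i b)
          = p (Function.update x i b) * p (Function.update y i a))
    -- minors involving the appended column of `i`-th marginal sums of `u`: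
    (hminu : ∀ (i : Fin n) (a b : Fin (d i)) (x : ∀ j, Fin (d j)),
        p (Function.update x i a) * (∑ z : ∀ j, Fin (d j), if z i = b then u z else 0)
          = p (Function.update x i b) * (∑ z : ∀ j, Fin (d j), if z i = a then u z else 0)) :
    ∀ x, p x = ∏ k, (∑ z : ∀ j, Fin (d j), if z k = x k then u z else 0) := by
  classical
  obtain ⟨v, hv⟩ := hrank
  -- Step A: the marginals of p equal the marginals of u
  have hA : ∀ (k : Fin n) (a : Fin (d k)),
      (∑ z : ∀ j, Fin (d j), if z k = a then p z else 0)
        = ∑ z : ∀ j, Fin (d j), if z k = a then u z else 0 := by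
    intro k a
    have key : ∀ b : Fin (d k),
        (∑ z : ∀ j, Fin (d j), if z k = a then p z else 0)
            * (∑ z : ∀ j, Fin (d j), if z k = b then u z else 0)
          = (∑ z : ∀ j, Fin (d j), if z k = b then p z else 0)
            * (∑ z : ∀ j, Fin (d j), if z k = a then u z else 0) := by
      intro b
      rw [stmt15_marg p k a, stmt15_marg p k b, Finset.sum_mul, Finset.sum_mul]
      refine Finset.sum_congr rfl fun w _ => ?_
      have h := hminu k a b ((Equiv.piSplitAt k (fun j => Fin (d j))).symm (a, w))
      rwa [stmt15_upd k a a w, stmt15_upd k b a w] at h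
    have h2 : (∑ z : ∀ j, Fin (d j), if z k = a then p z else 0)
        * (∑ b : Fin (d k), ∑ z : ∀ j, Fin (d j), if z k = b then u z else 0)
        = (∑ b : Fin (d k), ∑ z : ∀ j, Fin (d j), if z k = b then p z else 0)
          * (∑ z : ∀ j, Fin (d j), if z k = a then u z else 0) := by
      rw [Finset.mul_sum, Finset.sum_mul]
      exact Finset.sum_congr rfl fun b _ => key b
    rwa [stmt15_marg_total u k, stmt15_marg_total p k, husum, hpsum, mul_one, one_mul] at h2
  -- Step B: p x = product of marginals of p
  set S : Fin n → ℝ := fun k => ∑ b, v k b with hS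
  have hProdS : ∏ k, S k = 1 := by
    rw [← hpsum]
    rw [hS]
    rw [Finset.prod_univ_sum (fun _ => Finset.univ) (fun i b => v i b)]
    rw [Fintype.piFinset_univ]
    exact (Finset.sum_congr rfl fun x _ => (hv x).symm)
  have hPv : ∀ (k : Fin n) (a : Fin (d k)),
      (∑ z : ∀ j, Fin (d j), if z k = a then p z else 0) * S k = v k a := by
    intro k a
    have h1 : ∀ (w : ∀ j : {j // j ≠ k}, Fin (d j.1)) (c : Fin (d k)),
        p ((Equiv.piSplitAt k (fun j => Fin (d j))).symm (c, w))
          = v k c * ∏ i ∈ Finset.univ.erase k,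
              v i (((Equiv.piSplitAt k (fun j => Fin (d j))).symm (a, w)) i) := by
      intro w c
      rw [hv, ← Finset.mul_prod_erase Finset.univ _ (Finset.mem_univ k)]
      congr 1
      · rw [stmt15_symm_self]
      · refine Finset.prod_congr rfl fun i hi => ?_
        have hik : i ≠ k := Finset.ne_of_mem_erase hi
        rw [stmt15_symm_ne k c w i hik, stmt15_symm_ne k a w i hik]
    calc (∑ z : ∀ j, Fin (d j), if z k = a then p z else 0) * S k
        = ∑ w : ∀ j : {j // j ≠ k}, Fin (d j.1), ∑ b : Fin (d k),
            p ((Equiv.piSplitAt k (fun j => Fin (d j))).symm (a, w)) * v k b := by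
          rw [stmt15_marg p k a, Finset.sum_mul]
          exact Finset.sum_congr rfl fun w _ => Finset.mul_sum ..
      _ = ∑ w : ∀ j : {j // j ≠ k}, Fin (d j.1), ∑ b : Fin (d k),
            p ((Equiv.piSplitAt k (fun j => Fin (d j))).symm (b, w)) * v k a := by
          refine Finset.sum_congr rfl fun w _ => Finset.sum_congr rfl fun b _ => ?_
          rw [h1 w a, h1 w b]; ring
      _ = (∑ b : Fin (d k), ∑ z : ∀ j, Fin (d j), if z k = b then p z else 0) * v k a := by
          rw [Finset.sum_mul, Finset.sum_comm]
          refine Finset.sum_congr rfl fun b _ => ?_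
          rw [stmt15_marg p k b, Finset.sum_mul]
      _ = v k a := by rw [stmt15_marg_total p k, hpsum, one_mul]
  intro x
  calc p x = ∏ k, v k (x k) := hv x
    _ = ∏ k, ((∑ z : ∀ j, Fin (d j), if z k = x k then p z else 0) * S k) := by
        exact Finset.prod_congr rfl fun k _ => (hPv k (x k)).symm
    _ = (∏ k, (∑ z : ∀ j, Fin (d j), if z k = x k then p z else 0)) * ∏ k, S k := by
        rw [Finset.prod_mul_distrib]
    _ = ∏ k, (∑ z : ∀ j, Fin (d j), if z k = x k then u z else 0) := by
        rw [hProdS, mul_one]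
        exact Finset.prod_congr rfl fun k _ => hA k (x k)
end

section
/- Let A be an integer matrix with all column sums equal to c > 0, defining a projective toric variety, and let u be a fixed positive vector. The set of positive real points p on the toric variety (with sum of coordinates 1) satisfying Ap = (1/u_+) Au, where u_+ is the sum of entries of u, is nonempty and consists of exactly one point. -/
set_option maxHeartbeats 1000000

open Finset

private lemma exp_zpow' (x : ℝ) (k : ℤ) : Real.exp x ^ k = Real.exp (k * x) := by
  rw [← Real.rpow_intCast, Real.rpow_def_of_pos (Real.exp_pos x), Real.log_exp, mul_comm]


/-- Jensen-type equality core for uniqueness. -/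
private lemma birch_unique_core {N : Type*} [Fintype N] (p p' d : N → ℝ)
    (hp : ∀ i, 0 < p i) (hp' : ∀ i, 0 < p' i)
    (hp1 : ∑ i, p i = 1) (hp'1 : ∑ i, p' i = 1)
    (hrel : ∀ i, p' i = p i * Real.exp (d i))
    (hs : ∑ i, p i * d i = ∑ i, p' i * d i) : ∀ i, d i = 0 := by
  set s := ∑ i, p i * d i with hsdef
  have h1 : ∑ i, p i * Real.exp (d i) = 1 := by
    rw [← hp'1]; exact Finset.sum_congr rfl fun i _ => (hrel i).symm
  have hle1 : s + 1 ≤ ∑ i, p i * Real.exp (d i) := by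
    have : ∑ i, p i * (d i + 1) ≤ ∑ i, p i * Real.exp (d i) :=
      Finset.sum_le_sum fun i _ =>
        mul_le_mul_of_nonneg_left (Real.add_one_le_exp (d i)) (hp i).le
    calc s + 1 = ∑ i, p i * (d i + 1) := by
          simp [mul_add, Finset.sum_add_distrib, hp1, hsdef]
      _ ≤ _ := this
  have hs_nonpos : s ≤ 0 := by linarith [h1 ▸ hle1]
  have h2 : ∑ i, p' i * Real.exp (-(d i)) = 1 := by
    rw [← hp1]
    refine Finset.sum_congr rfl fun i _ => ?_
    rw [hrel i, Real.exp_neg]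
    field_simp
  have hle2 : (1 - s) ≤ ∑ i, p' i * Real.exp (-(d i)) := by
    have : ∑ i, p' i * (-(d i) + 1) ≤ ∑ i, p' i * Real.exp (-(d i)) :=
      Finset.sum_le_sum fun i _ =>
        mul_le_mul_of_nonneg_left (Real.add_one_le_exp (-(d i))) (hp' i).le
    calc (1 : ℝ) - s = ∑ i, p' i * (-(d i) + 1) := by
          simp only [mul_add, mul_neg, mul_one, Finset.sum_add_distrib,
            Finset.sum_neg_distrib, hp'1, hs, hsdef]
          ring
      _ ≤ _ := this
  have hs0 : s = 0 := le_antisymm hs_nonpos (by linarith [h2 ▸ hle2])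
  have hzero : ∑ i, p i * (Real.exp (d i) - (d i + 1)) = 0 := by
    simp only [mul_sub]
    rw [Finset.sum_sub_distrib]
    have : ∑ i, p i * (d i + 1) = s + 1 := by
      simp [mul_add, Finset.sum_add_distrib, hp1, hsdef]
    rw [h1, this, hs0]; ring
  have hterm : ∀ i ∈ Finset.univ, p i * (Real.exp (d i) - (d i + 1)) = 0 := by
    refine (Finset.sum_eq_zero_iff_of_nonneg ?_).1 hzero
    intro i _
    have := Real.add_one_le_exp (d i)
    have := (hp i).le
    nlinarith
  intro i
  by_contra hd
  have h3 := Real.add_one_lt_exp hd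
  have h4 := hterm i (Finset.mem_univ i)
  have := hp i
  nlinarith

/-- Lower bound for the free energy. -/
private lemma birch_lb {N : Type*} [Fintype N] (w : N → ℝ)
    (hw1 : ∑ i, w i = 1) (wm : ℝ) (hwm : 0 ≤ wm) (hwml : ∀ i, wm ≤ w i)
    (y : N → ℝ) (i k : N) :
    wm * (y i - y k) ≤ Real.log (∑ l, Real.exp (y l)) - ∑ l, w l * y l := by
  obtain ⟨i₀, _, hM⟩ := Finset.exists_max_image Finset.univ y ⟨i, Finset.mem_univ i⟩
  set M := y i₀ with hMdef
  have hpos : (0 : ℝ) < ∑ l, Real.exp (y l) :=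
    Finset.sum_pos (fun l _ => Real.exp_pos _) ⟨i, Finset.mem_univ i⟩
  have hlog : M ≤ Real.log (∑ l, Real.exp (y l)) := by
    rw [Real.le_log_iff_exp_le hpos]
    exact Finset.single_le_sum (fun l _ => (Real.exp_pos (y l)).le) (Finset.mem_univ i₀)
  have hsum : ∑ l, w l * y l ≤ M - wm * (M - y k) := by
    have e1 : ∑ l, w l * y l = M - ∑ l, w l * (M - y l) := by
      simp only [mul_sub]
      rw [Finset.sum_sub_distrib, ← Finset.sum_mul, hw1]
      ring
    have e2 : wm * (M - y k) ≤ ∑ l, w l * (M - y l) := by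
      have h3 : w k * (M - y k) ≤ ∑ l, w l * (M - y l) :=
        Finset.single_le_sum (fun l _ => mul_nonneg ((hwm.trans (hwml l)))
          (sub_nonneg.2 (hM l (Finset.mem_univ l)))) (Finset.mem_univ k)
      have h4 : wm * (M - y k) ≤ w k * (M - y k) :=
        mul_le_mul_of_nonneg_right (hwml k) (sub_nonneg.2 (hM k (Finset.mem_univ k)))
      linarith
    linarith
  have hyi : y i ≤ M := hM i (Finset.mem_univ i)
  nlinarith


/-- existence and uniqueness in Birch's theorem: Let `A` be an
integer matrix with all column sums equal to `c > 0`, defining the projective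
toric variety as the closure of `{(θ^{A_0},…,θ^{A_n}) : θ ∈ (ℝ_{>0})^m}`, and
let `u` be a positive vector.  The set of positive points `p` on the toric
variety with `∑ pᵢ = 1` satisfying `Ap = (1/u₊) Au` consists of exactly one
point. -/
theorem stmt17 (m n : ℕ) (A : Matrix (Fin m) (Fin (n + 1)) ℤ) (c : ℤ) (hc : 0 < c)
    (hcol : ∀ i, ∑ j, A j i = c)
    (u : Fin (n + 1) → ℝ) (hu : ∀ i, 0 < u i) :
    ∃! p : Fin (n + 1) → ℝ,
      p ∈ closure {q : Fin (n + 1) → ℝ |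
          ∃ θ : Fin m → ℝ, (∀ j, 0 < θ j) ∧ ∀ i, q i = ∏ j, θ j ^ A j i}
        ∧ (∀ i, 0 < p i) ∧ ∑ i, p i = 1
        ∧ (A.map (Int.cast : ℤ → ℝ)).mulVec p
            = (1 / ∑ i, u i) • (A.map (Int.cast : ℤ → ℝ)).mulVec u := by
  classical
  set B : Matrix (Fin m) (Fin (n+1)) ℝ := A.map (Int.cast : ℤ → ℝ) with hB
  set S : Set (Fin (n+1) → ℝ) := {q : Fin (n + 1) → ℝ |
      ∃ θ : Fin m → ℝ, (∀ j, 0 < θ j) ∧ ∀ i, q i = ∏ j, θ j ^ A j i} with hS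
  set V : Submodule ℝ (Fin (n+1) → ℝ) := LinearMap.range (Matrix.mulVecLin B.transpose) with hVdef
  have hVmem : ∀ y : Fin (n+1) → ℝ, y ∈ V ↔ ∃ x : Fin m → ℝ, ∀ i, y i = ∑ j, (A j i : ℝ) * x j := by
    intro y
    constructor
    · rintro ⟨x, rfl⟩
      exact ⟨x, fun i => by
        simp [Matrix.mulVecLin_apply, Matrix.mulVec, Matrix.vecMul, dotProduct, hB,
          Matrix.transpose_apply, Matrix.map_apply, mul_comm]⟩
    · rintro ⟨x, hx⟩
      refine ⟨x, funext fun i => ?_⟩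
      rw [hx i]
      simp [Matrix.mulVecLin_apply, Matrix.mulVec, Matrix.vecMul, dotProduct, hB,
        Matrix.transpose_apply, Matrix.map_apply, mul_comm]
  have hone : (fun _ => (1:ℝ)) ∈ V := by
    rw [hVmem]
    refine ⟨fun _ => (c : ℝ)⁻¹, fun i => ?_⟩
    rw [← Finset.sum_mul]
    have : (∑ j, (A j i : ℝ)) = (c : ℝ) := by
      rw [← Int.cast_sum, hcol i]
    rw [this, mul_inv_cancel₀ (by exact_mod_cast hc.ne')]
  have hVclosed : IsClosed (V : Set (Fin (n+1) → ℝ)) := V.closed_of_finiteDimensional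
  have hSV : ∀ q ∈ S, (∀ i, 0 < q i) ∧ (fun i => Real.log (q i)) ∈ V := by
    rintro q ⟨θ, hθ, hq⟩
    have hqpos : ∀ i, 0 < q i := fun i => by
      rw [hq i]; exact Finset.prod_pos fun j _ => zpow_pos (hθ j) _
    refine ⟨hqpos, (hVmem _).2 ⟨fun j => Real.log (θ j), fun i => ?_⟩⟩
    rw [hq i, Real.log_prod (fun j _ => (zpow_pos (hθ j) _).ne')]
    exact Finset.sum_congr rfl fun j _ => Real.log_zpow (θ j) (A j i)
  have hVS : ∀ x : Fin m → ℝ, (fun i => Real.exp (∑ j, (A j i : ℝ) * x j)) ∈ S := by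
    intro x
    refine ⟨fun j => Real.exp (x j), fun j => Real.exp_pos _, fun i => ?_⟩
    show Real.exp (∑ j, (A j i : ℝ) * x j) = ∏ j, Real.exp (x j) ^ A j i
    rw [Real.exp_sum]
    exact Finset.prod_congr rfl fun j _ => (exp_zpow' (x j) (A j i)).symm
  have hclosV : ∀ p : Fin (n+1) → ℝ, (∀ i, 0 < p i) → p ∈ closure S →
      (fun i => Real.log (p i)) ∈ V := by
    intro p hp hpc
    obtain ⟨q, hqS, hql⟩ := mem_closure_iff_seq_limit.1 hpc
    have hmem : ∀ k, (fun i => Real.log (q k i)) ∈ V := fun k => (hSV _ (hqS k)).2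
    have htend : Filter.Tendsto (fun k => (fun i => Real.log (q k i))) Filter.atTop
        (nhds (fun i => Real.log (p i))) := by
      rw [tendsto_pi_nhds]
      intro i
      exact (Real.continuousAt_log (hp i).ne').tendsto.comp ((tendsto_pi_nhds.1 hql) i)
    exact hVclosed.mem_of_tendsto htend (Filter.Eventually.of_forall hmem)
  have hBmulVec : ∀ (q : Fin (n+1) → ℝ) (j : Fin m),
      (B.mulVec q) j = ∑ i, (A j i : ℝ) * q i := by
    intro q j
    simp [Matrix.mulVec, dotProduct, hB, Matrix.map_apply]
  -- the target distribution
  set sU := ∑ i, u i with hsU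
  have hsU0 : 0 < sU := Finset.sum_pos (fun i _ => hu i) ⟨0, Finset.mem_univ 0⟩
  set w : Fin (n+1) → ℝ := fun i => u i / sU with hwdef
  have hw : ∀ i, 0 < w i := fun i => div_pos (hu i) hsU0
  have hw1 : ∑ i, w i = 1 := by
    rw [hwdef]
    dsimp only
    rw [← Finset.sum_div, ← hsU, div_self hsU0.ne']
  have hBw : B.mulVec w = (1 / sU) • B.mulVec u := by
    have : w = (1 / sU) • u := by
      funext i
      simp [hwdef, smul_eq_mul, div_eq_mul_inv, mul_comm]
    rw [this, Matrix.mulVec_smul]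
  -- existence: minimize the free energy
  have hex : ∃ p : Fin (n+1) → ℝ, (∀ i, 0 < p i) ∧ (∑ i, p i = 1) ∧
      ((fun i => Real.log (p i)) ∈ V) ∧
      (∀ j, ∑ i, (A j i : ℝ) * p i = ∑ i, (A j i : ℝ) * w i) := by
    obtain ⟨k₀, -, hk₀⟩ := Finset.exists_min_image Finset.univ w ⟨0, Finset.mem_univ 0⟩
    set wm := w k₀ with hwmdef
    have hwm0 : 0 < wm := hw k₀
    have hwml : ∀ i, wm ≤ w i := fun i => hk₀ i (Finset.mem_univ i)
    set g : (Fin (n+1) → ℝ) → ℝ :=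
      fun y => Real.log (∑ l, Real.exp (y l)) - ∑ l, w l * y l with hg
    have hg0 : 0 ≤ g 0 := by
      simp only [hg, Pi.zero_apply, Real.exp_zero, mul_zero, Finset.sum_const, Finset.card_univ,
        Fintype.card_fin, nsmul_eq_mul, mul_one, Finset.sum_const_zero, sub_zero]
      exact Real.log_nonneg (by exact_mod_cast Nat.one_le_iff_ne_zero.2 (Nat.succ_ne_zero n))
    set C := g 0 / wm with hC
    have hC0 : 0 ≤ C := div_nonneg hg0 hwm0.le
    have hbound : ∀ y : Fin (n+1) → ℝ, (∑ i, y i = 0) → g y ≤ g 0 → ∀ i, ‖y i‖ ≤ C := by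
      intro y hy0 hgy i
      have hub : ∀ i' k : Fin (n+1), y i' - y k ≤ C := by
        intro i' k
        have h1 := birch_lb w hw1 wm hwm0.le hwml y i' k
        have h2 : wm * (y i' - y k) ≤ g 0 := le_trans (by exact h1) hgy
        rw [hC, le_div_iff₀ hwm0, mul_comm]
        exact h2
      have hkneg : ∃ k, y k ≤ 0 := by
        by_contra h
        push_neg at h
        exact absurd hy0 (ne_of_gt (Finset.sum_pos (fun l _ => h l) ⟨0, Finset.mem_univ 0⟩))
      have hkpos : ∃ k, 0 ≤ y k := by
        by_contra h
        push_neg at h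
        exact absurd hy0 (ne_of_lt (Finset.sum_neg (fun l _ => h l) ⟨0, Finset.mem_univ 0⟩))
      obtain ⟨k1, hk1⟩ := hkneg
      obtain ⟨k2, hk2⟩ := hkpos
      rw [Real.norm_eq_abs, abs_le]
      constructor
      · have := hub k2 i
        linarith
      · have := hub i k1
        linarith
    set K : Set (Fin (n+1) → ℝ) :=
      {y | y ∈ V ∧ (∑ i, y i = 0) ∧ ∀ i, ‖y i‖ ≤ C} with hK
    have hKclosed : IsClosed K := by
      have h1 : IsClosed {y : Fin (n+1) → ℝ | y ∈ V} := hVclosed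
      have h2 : IsClosed {y : Fin (n+1) → ℝ | ∑ i, y i = 0} :=
        isClosed_eq (by continuity) continuous_const
      have h3 : IsClosed {y : Fin (n+1) → ℝ | ∀ i, ‖y i‖ ≤ C} := by
        have : {y : Fin (n+1) → ℝ | ∀ i, ‖y i‖ ≤ C} = ⋂ i, {y | ‖y i‖ ≤ C} := by
          ext y; simp
        rw [this]
        exact isClosed_iInter fun i => isClosed_le ((continuous_apply i).norm) continuous_const
      exact (h1.inter (h2.inter h3) : _)
    have hKbdd : Bornology.IsBounded K := by
      refine (Metric.isBounded_closedBall (x := (0 : Fin (n+1) → ℝ)) (r := C)).subset ?_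
      intro y hy
      rw [Metric.mem_closedBall, dist_zero_right]
      exact pi_norm_le_iff_of_nonneg hC0 |>.2 hy.2.2
    have hKcompact : IsCompact K := Metric.isCompact_of_isClosed_isBounded hKclosed hKbdd
    have h0K : (0 : Fin (n+1) → ℝ) ∈ K := by
      refine ⟨V.zero_mem, by simp, fun i => by simp [hC0]⟩
    have hgcont : Continuous g := by
      rw [hg]
      refine Continuous.sub ?_ ?_
      · refine Continuous.log ?_ ?_
        · exact continuous_finset_sum _ fun l _ => Real.continuous_exp.comp (continuous_apply l)
        · intro y
          exact (Finset.sum_pos (fun l _ => Real.exp_pos _) ⟨0, Finset.mem_univ 0⟩).ne'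
      · exact continuous_finset_sum _ fun l _ => (continuous_const.mul (continuous_apply l))
    obtain ⟨y, hyK, hymin⟩ := hKcompact.exists_isMinOn ⟨0, h0K⟩ hgcont.continuousOn
    have hglob : ∀ y' : Fin (n+1) → ℝ, y' ∈ V → (∑ i, y' i = 0) → g y ≤ g y' := by
      intro y' hy'V hy'0
      by_cases h : g y' ≤ g 0
      · exact hymin ⟨hy'V, hy'0, hbound y' hy'0 h⟩
      · exact le_trans (hymin h0K) (le_of_not_ge h)
    set Z := ∑ l, Real.exp (y l) with hZdef
    have hZ : 0 < Z := Finset.sum_pos (fun l _ => Real.exp_pos _) ⟨0, Finset.mem_univ 0⟩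
    set p : Fin (n+1) → ℝ := fun i => Real.exp (y i) / Z with hp
    have hppos : ∀ i, 0 < p i := fun i => div_pos (Real.exp_pos _) hZ
    have hpsum : ∑ i, p i = 1 := by
      rw [hp]
      dsimp only
      rw [← Finset.sum_div, ← hZdef, div_self hZ.ne']
    have hlogp : (fun i => Real.log (p i)) ∈ V := by
      have heq : (fun i => Real.log (p i)) = y - (Real.log Z) • (fun _ => (1:ℝ)) := by
        funext i
        simp only [hp, Pi.sub_apply, Pi.smul_apply, smul_eq_mul, mul_one]
        rw [Real.log_div (Real.exp_pos _).ne' hZ.ne', Real.log_exp]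
      rw [heq]
      exact V.sub_mem hyK.1 (V.smul_mem _ hone)
    have hderiv : ∀ d : Fin (n+1) → ℝ, d ∈ V → (∑ i, d i = 0) →
        ∑ i, p i * d i = ∑ i, w i * d i := by
      intro d hdV hd0
      set φ : ℝ → ℝ := fun t =>
        Real.log (∑ l, Real.exp (y l + t * d l)) - ∑ l, w l * (y l + t * d l) with hφ
      have hφeq : ∀ t, φ t = g (y + t • d) := by
        intro t
        simp [hφ, hg, Pi.add_apply, Pi.smul_apply, smul_eq_mul]
      have hφmin : ∀ t, φ 0 ≤ φ t := by
        intro t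
        rw [hφeq, hφeq]
        have h0 : y + (0:ℝ) • d = y := by simp
        rw [h0]
        refine hglob _ (V.add_mem hyK.1 (V.smul_mem _ hdV)) ?_
        simp only [Pi.add_apply, Pi.smul_apply, smul_eq_mul]
        rw [Finset.sum_add_distrib, ← Finset.mul_sum, hd0, hyK.2.1]
        ring
      have hlocal : IsLocalMin φ 0 := Filter.Eventually.of_forall hφmin
      have h1 : ∀ l, HasDerivAt (fun t : ℝ => y l + t * d l) (d l) 0 := by
        intro l
        simpa using (hasDerivAt_mul_const (d l)).const_add (y l)
      have h3 : HasDerivAt (fun t => ∑ l, Real.exp (y l + t * d l))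
          (∑ l, Real.exp (y l) * d l) 0 := by
        refine HasDerivAt.fun_sum fun l _ => ?_
        simpa using (h1 l).exp
      have hne : (∑ l, Real.exp (y l + 0 * d l)) ≠ 0 :=
        (Finset.sum_pos (fun l _ => Real.exp_pos _) ⟨0, Finset.mem_univ 0⟩).ne'
      have h4 := h3.log hne
      have h5 : HasDerivAt (fun t => ∑ l, w l * (y l + t * d l)) (∑ l, w l * d l) 0 :=
        HasDerivAt.fun_sum fun l _ => (h1 l).const_mul (w l)
      have h6 : HasDerivAt φ ((∑ l, Real.exp (y l) * d l) / Z - ∑ l, w l * d l) 0 := by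
        have := h4.fun_sub h5
        simpa [hφ, hZdef] using this
      have h7 := hlocal.hasDerivAt_eq_zero h6
      have h8 : (∑ l, Real.exp (y l) * d l) / Z = ∑ l, w l * d l := by linarith
      calc ∑ i, p i * d i = (∑ l, Real.exp (y l) * d l) / Z := by
            rw [Finset.sum_div]
            exact Finset.sum_congr rfl fun i _ => by rw [hp]; ring
        _ = ∑ i, w i * d i := h8
    have hallV : ∀ v ∈ V, ∑ i, p i * v i = ∑ i, w i * v i := by
      intro v hv
      set c' := (∑ l, v l) / (n+1 : ℝ) with hc'
      have hd : (fun i => v i - c') ∈ V := by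
        have : (fun i => v i - c') = v - c' • (fun _ => (1:ℝ)) := by
          funext i; simp [smul_eq_mul]
        rw [this]
        exact V.sub_mem hv (V.smul_mem _ hone)
      have hd0 : ∑ i, (v i - c') = 0 := by
        rw [Finset.sum_sub_distrib, Finset.sum_const, Finset.card_univ, Fintype.card_fin,
          nsmul_eq_mul, hc']
        have : ((n:ℝ)+1) ≠ 0 := by positivity
        field_simp
        push_cast; ring
      have := hderiv _ hd hd0
      simp only [mul_sub] at this
      rw [Finset.sum_sub_distrib, Finset.sum_sub_distrib, ← Finset.sum_mul, ← Finset.sum_mul,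
        hpsum, hw1] at this
      linarith
    refine ⟨p, hppos, hpsum, hlogp, fun j => ?_⟩
    have hrow : (fun i => (A j i : ℝ)) ∈ V := by
      rw [hVmem]
      refine ⟨Pi.single j 1, fun i => ?_⟩
      rw [Finset.sum_eq_single j]
      · simp
      · intro j' _ hj'
        simp [Pi.single_eq_of_ne hj']
      · simp
    have := hallV _ hrow
    calc ∑ i, (A j i : ℝ) * p i = ∑ i, p i * (A j i : ℝ) :=
          Finset.sum_congr rfl fun i _ => mul_comm _ _
      _ = ∑ i, w i * (A j i : ℝ) := this
      _ = ∑ i, (A j i : ℝ) * w i := Finset.sum_congr rfl fun i _ => mul_comm _ _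
  obtain ⟨p, hppos, hpsum, hlogp, hApw⟩ := hex
  have hpmulVec : B.mulVec p = (1 / sU) • B.mulVec u := by
    rw [← hBw]
    funext j
    rw [hBmulVec, hBmulVec]
    exact hApw j
  have hpS : p ∈ S := by
    obtain ⟨x, hx⟩ := (hVmem _).1 hlogp
    have : p = fun i => Real.exp (∑ j, (A j i : ℝ) * x j) := by
      funext i
      rw [← hx i]
      exact (Real.exp_log (hppos i)).symm
    rw [this]
    exact hVS x
  refine ⟨p, ⟨subset_closure hpS, hppos, hpsum, hpmulVec⟩, ?_⟩
  rintro p' ⟨hp'c, hp'pos, hp'sum, hp'mul⟩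
  have hlogp' : (fun i => Real.log (p' i)) ∈ V := hclosV p' hp'pos hp'c
  have hdV : (fun i => Real.log (p' i) - Real.log (p i)) ∈ V := by
    have : (fun i => Real.log (p' i) - Real.log (p i))
        = (fun i => Real.log (p' i)) - (fun i => Real.log (p i)) := rfl
    rw [this]
    exact V.sub_mem hlogp' hlogp
  obtain ⟨z, hz⟩ := (hVmem _).1 hdV
  set d : Fin (n+1) → ℝ := fun i => Real.log (p' i) - Real.log (p i) with hd
  have hmulVecEq : B.mulVec p' = B.mulVec p := by
    rw [hp'mul, hpmulVec]
  have key : ∀ q : Fin (n+1) → ℝ, ∑ i, q i * d i = ∑ j, (B.mulVec q) j * z j := by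
    intro q
    have e1 : ∀ i, q i * d i = ∑ j, (A j i : ℝ) * q i * z j := by
      intro i
      rw [show d i = ∑ j, (A j i : ℝ) * z j from hz i, Finset.mul_sum]
      exact Finset.sum_congr rfl fun j _ => by ring
    rw [Finset.sum_congr rfl (fun i _ => e1 i), Finset.sum_comm]
    refine Finset.sum_congr rfl fun j _ => ?_
    rw [hBmulVec, Finset.sum_mul]
  have hs : ∑ i, p i * d i = ∑ i, p' i * d i := by
    rw [key, key, hmulVecEq]
  have hrel : ∀ i, p' i = p i * Real.exp (d i) := by
    intro i
    rw [hd]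
    dsimp only
    rw [Real.exp_sub, Real.exp_log (hp'pos i), Real.exp_log (hppos i)]
    rw [mul_div_assoc']
    exact (mul_div_cancel_left₀ _ (hppos i).ne').symm
  have hd0 : ∀ i, d i = 0 :=
    birch_unique_core p p' d hppos hp'pos hpsum hp'sum hrel hs
  funext i
  rw [hrel i, hd0 i, Real.exp_zero, mul_one]
end
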